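/- arXiv:1108.2393 — 2 statements merged into one kernel-verified Lean document; each statement's English description precedes it below -/
import Mathlib

section
/- Let T̂ be a C×E matrix over a field F with every C×C submatrix invertible. If z and z' are vectors in F^E each of weight less than C/2, and T̂z = T̂z', then z = z'. -/
open Finset

/-- If every C×C submatrix of `T` is invertible and `z, z'` each have weight less
than `C/2`, then `T z = T z'` implies `z = z'`. -/
theorem mulVec_injOn_low_weight {F : Type*} [Field F] [DecidableEq F]
    (C E : ℕ) (hCE : C ≤ E) (T : Matrix (Fin C) (Fin E) F)
    (hsub : ∀ f : Fin C → Fin E, Function.Injective f → IsUnit (T.submatrix id f))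
    (z z' : Fin E → F)
    (hwt : 2 * (Finset.univ.filter fun i => z i ≠ 0).card < C)
    (hwt' : 2 * (Finset.univ.filter fun i => z' i ≠ 0).card < C)
    (heq : T.mulVec z = T.mulVec z') :
    z = z' := by
  set w : Fin E → F := z - z' with hw
  have hTw : T.mulVec w = 0 := by
    rw [hw, Matrix.mulVec_sub, heq, sub_self]
  set S : Finset (Fin E) := Finset.univ.filter (fun i => w i ≠ 0) with hS
  have hScard : S.card ≤ C := by
    have hsub' : S ⊆ (Finset.univ.filter fun i => z i ≠ 0) ∪
        (Finset.univ.filter fun i => z' i ≠ 0) := by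
      intro i hi
      simp only [hS, mem_filter, mem_union, mem_univ, true_and] at hi ⊢
      by_contra h
      push_neg at h
      simp [hw, h.1, h.2] at hi
    calc S.card ≤ _ := Finset.card_le_card hsub'
      _ ≤ _ := Finset.card_union_le _ _
      _ ≤ C := by omega
  obtain ⟨S', hSS', hS'card⟩ := Finset.exists_superset_card_eq hScard
    (by simpa using hCE : C ≤ (Finset.univ : Finset (Fin E)).card)
  set f : Fin C → Fin E := fun j => S'.orderIsoOfFin hS'card j with hf
  have hfinj : Function.Injective f := fun a b hab => by
    apply (S'.orderIsoOfFin hS'card).injective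
    exact Subtype.ext hab
  have hinj := Matrix.mulVec_injective_iff_isUnit.2 (hsub f hfinj)
  have hv : (T.submatrix id f).mulVec (w ∘ f) = 0 := by
    funext i
    have : ∑ j : Fin C, T i (f j) * w (f j) = ∑ e ∈ S', T i e * w e := by
      rw [← Finset.sum_attach S' (fun e => T i e * w e)]
      exact Fintype.sum_equiv (S'.orderIsoOfFin hS'card).toEquiv _ _ (fun j => rfl)
    have h2 : ∑ e ∈ S', T i e * w e = ∑ e : Fin E, T i e * w e := by
      apply Finset.sum_subset (Finset.subset_univ S')
      intro e _ he
      have : w e = 0 := by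
        by_contra hne
        exact he (hSS' (by simp [hS, hne]))
      simp [this]
    have h3 := congrFun hTw i
    simpa [Matrix.mulVec, dotProduct, this, h2] using h3
  have hwf : w ∘ f = 0 := hinj (by simpa using hv)
  have hwzero : w = 0 := by
    funext e
    show w e = 0
    by_contra hne
    have heS' : e ∈ S' := hSS' (by simp [hS, hne])
    obtain ⟨j, hj⟩ := (S'.orderIsoOfFin hS'card).surjective ⟨e, heS'⟩
    have h5 : w (f j) = 0 := congrFun hwf j
    simp only [hf, hj] at h5
    exact hne h5
  funext e
  exact congrFun (sub_eq_zero.mp hwzero) e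
end

section
/- Let T̂ be a C×E matrix over a field F with every C×C submatrix invertible, and let k < C/2. Then the map Z ↦ T̂Z is injective on the set of E×n matrices over F each of whose columns has weight at most k. Consequently, the number of distinct values of T̂Z over this set is exactly (Σ_{j=0}^{k} binom(E,j)(|F|-1)^j)^n when F is finite. -/
/-! If `T * Z = T * Z'`, each column of `Z - Z'` lies in the kernel of `T` and has at most
`2k < C` nonzero entries. Enlarging its support to `C` coordinates exhibits it in the kernel of an
invertible `C × C` submatrix, so it vanishes. The count is then the size of the Hamming ball of
radius `k` raised to the number of columns; the ball is counted by sorting vectors by support. -/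

open Finset

namespace Matrix

variable {m n ι R : Type*}

theorem submatrix_id_mulVec_comp_of_support_subset [Fintype ι] [Fintype n]
    [NonUnitalNonAssocSemiring R] (A : Matrix m ι R) {f : n → ι} (hf : Function.Injective f)
    {v : ι → R} (hv : Function.support v ⊆ Set.range f) :
    A.submatrix id f *ᵥ (v ∘ f) = A *ᵥ v := by
  ext i
  refine Fintype.sum_of_injective f hf _ _ (fun j hj => ?_) fun _ => rfl
  rw [Function.notMem_support.mp (mt (@hv j) hj), mul_zero]

theorem injOn_mul_of_injOn_mulVec [Fintype ι] [NonUnitalNonAssocSemiring R] {A : Matrix m ι R}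
    {s : Set (ι → R)} (h : Set.InjOn (A *ᵥ ·) s) :
    Set.InjOn (A * ·) {Z : Matrix ι n R | ∀ j, (fun i => Z i j) ∈ s} := by
  intro Z hZ W hW hZW
  ext i j
  exact congrFun (h (hZ j) (hW j) (funext fun i' => congrFun (congrFun hZW i') j)) i

theorem card_setOf_forall_col_mem [Fintype n] (s : Set (ι → R)) :
    Nat.card {Z : Matrix ι n R | ∀ j, (fun i => Z i j) ∈ s} = Nat.card s ^ Fintype.card n := by
  let e : {Z : Matrix ι n R | ∀ j, (fun i => Z i j) ∈ s} ≃ (n → s) :=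
    { toFun := fun Z j => ⟨fun i => Z.1 i j, Z.2 j⟩
      invFun := fun g => ⟨of fun i j => (g j).1 i, fun j => (g j).2⟩ }
  rw [Nat.card_congr e, Nat.card_pi, prod_const, card_univ]

variable {K : Type*} [Field K] [DecidableEq K] [Fintype m] [DecidableEq m] [Fintype ι]

theorem eq_zero_of_mulVec_eq_zero_of_hammingNorm_le (A : Matrix m ι K)
    (hcard : Fintype.card m ≤ Fintype.card ι)
    (hA : ∀ f : m → ι, Function.Injective f → IsUnit (A.submatrix id f)) {v : ι → K}
    (hv : hammingNorm v ≤ Fintype.card m) (hAv : A *ᵥ v = 0) : v = 0 := by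
  obtain ⟨t, hsupp, ht⟩ := exists_superset_card_eq hv hcard
  let e : m ≃ t := Fintype.equivOfCardEq (by rw [Fintype.card_coe, ht])
  let f : m → ι := fun j => e j
  have hf : Function.Injective f := Subtype.val_injective.comp e.injective
  have hrange : Function.support v ⊆ Set.range f := fun i hi =>
    ⟨e.symm ⟨i, hsupp (by simpa [hammingNorm] using hi)⟩, by simp [f]⟩
  have hvf : v ∘ f = 0 := mulVec_injective_iff_isUnit.mpr (hA f hf) <| by
    rw [submatrix_id_mulVec_comp_of_support_subset A hf hrange, hAv, mulVec_zero]
  funext i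
  by_contra hi
  obtain ⟨j, rfl⟩ := hrange hi
  exact hi (congrFun hvf j)

theorem injOn_mulVec_of_hammingNorm_le (A : Matrix m ι K)
    (hcard : Fintype.card m ≤ Fintype.card ι)
    (hA : ∀ f : m → ι, Function.Injective f → IsUnit (A.submatrix id f)) {k : ℕ}
    (hk : 2 * k ≤ Fintype.card m) : Set.InjOn (A *ᵥ ·) {v | hammingNorm v ≤ k} := by
  intro v hv w hw hvw
  rw [← sub_eq_zero]
  refine eq_zero_of_mulVec_eq_zero_of_hammingNorm_le A hcard hA ?_ ?_
  · calc hammingNorm (v - w) = hammingDist v w := by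
          rw [hammingDist_comm, hammingDist_eq_hammingNorm, neg_add_eq_sub]
      _ ≤ hammingDist v 0 + hammingDist 0 w := hammingDist_triangle v 0 w
      _ ≤ Fintype.card m := by
          rw [hammingDist_zero_right, hammingDist_zero_left]
          exact (add_le_add hv hw).trans (by omega)
  · rw [mulVec_sub, sub_eq_zero]
    exact hvw

end Matrix

section HammingBall

variable {ι α : Type*} [Fintype ι] [DecidableEq ι] [Zero α] [Fintype α] [DecidableEq α]

theorem filter_support_eq_piFinset (s : Finset ι) :
    ({v : ι → α | ({i | v i ≠ 0} : Finset ι) = s} : Finset (ι → α)) =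
      Fintype.piFinset fun i => if i ∈ s then univ.erase 0 else {0} := by
  ext v
  simp only [mem_filter, mem_univ, true_and, Fintype.mem_piFinset, Finset.ext_iff]
  refine forall_congr' fun i => ?_
  split_ifs with hi <;> simp [hi]

theorem card_filter_support_eq (s : Finset ι) :
    #{v : ι → α | ({i | v i ≠ 0} : Finset ι) = s} = (Fintype.card α - 1) ^ #s := by
  rw [filter_support_eq_piFinset, Fintype.card_piFinset]
  simp [apply_ite card, prod_ite_mem, card_erase_of_mem]

theorem card_filter_hammingNorm_eq (j : ℕ) :
    #{v : ι → α | hammingNorm v = j} = (Fintype.card ι).choose j * (Fintype.card α - 1) ^ j := by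
  rw [card_eq_sum_card_fiberwise (s := {v : ι → α | hammingNorm v = j})
    (f := fun v : ι → α => ({i | v i ≠ 0} : Finset ι)) (t := powersetCard j univ)
    fun v hv => mem_powersetCard_univ.mpr (mem_filter.mp hv).2]
  rw [← card_univ, ← card_powersetCard, ← smul_eq_mul, ← sum_const]
  refine sum_congr rfl fun s hs => ?_
  have hs : #s = j := mem_powersetCard_univ.mp hs
  rw [filter_filter, ← hs, ← card_filter_support_eq]
  congr 1
  exact filter_congr fun v _ => and_iff_right_of_imp fun hv => congrArg card hv

theorem card_filter_hammingNorm_le (k : ℕ) :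
    #{v : ι → α | hammingNorm v ≤ k} =
      ∑ j ∈ range (k + 1), (Fintype.card ι).choose j * (Fintype.card α - 1) ^ j := by
  rw [card_eq_sum_card_fiberwise (f := hammingNorm) (t := range (k + 1))
    fun v hv => mem_range_succ_iff.mpr (mem_filter.mp hv).2]
  refine sum_congr rfl fun j hj => ?_
  rw [filter_filter, ← card_filter_hammingNorm_eq]
  congr 1
  exact filter_congr fun v _ => and_iff_right_of_imp fun hv => hv ▸ mem_range_succ_iff.mp hj

end HammingBall

/-- If every C×C submatrix of `T` is invertible and `2k < C`, the map `Z ↦ T Z` is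
injective on E×n matrices all of whose columns have weight at most `k`; consequently,
over a finite field `F` the number of distinct values of `T Z` is exactly
`(Σ_{j=0}^{k} binom(E,j)(|F|-1)^j)^n`. -/
theorem mulMatrix_injOn_low_colWeight {F : Type*} [Field F] [Fintype F] [DecidableEq F]
    (C E n k : ℕ) (hCE : C ≤ E) (hk : 2 * k < C)
    (T : Matrix (Fin C) (Fin E) F)
    (hsub : ∀ f : Fin C → Fin E, Function.Injective f → IsUnit (T.submatrix id f))
    (S : Set (Matrix (Fin E) (Fin n) F))
    (hS : S = {Z | ∀ j : Fin n, (Finset.univ.filter fun i => Z i j ≠ 0).card ≤ k}) :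
    Set.InjOn (fun Z => T * Z) S ∧
    ((fun Z => T * Z) '' S).ncard =
      (∑ j ∈ Finset.range (k + 1), Nat.choose E j * (Fintype.card F - 1) ^ j) ^ n := by
  replace hS : S = {Z | ∀ j, (fun i => Z i j) ∈ {v | hammingNorm v ≤ k}} := hS
  have hinj : Set.InjOn (T * ·) S := hS ▸ Matrix.injOn_mul_of_injOn_mulVec
    (T.injOn_mulVec_of_hammingNorm_le (by simpa using hCE) hsub (by simpa using hk.le))
  refine ⟨hinj, ?_⟩
  rw [hinj.ncard_image, hS, ← Nat.card_coe_set_eq, Matrix.card_setOf_forall_col_mem,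
    Nat.card_eq_card_toFinset, Set.toFinset_ofPred, card_filter_hammingNorm_le, Fintype.card_fin,
    Fintype.card_fin]
end
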